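/- arXiv:math/0203002 — 2 statements merged into one kernel-verified Lean document; each statement's English description precedes it below -/
import Mathlib

section
/- Incompleteness for non-halting (Turing's corollary for formal axiomatic theories): let S be a set of natural numbers that is recursively enumerable (RePred fun n => n ∈ S) — think of S as the set of indices n for which some fixed formal axiomatic theory proves 'the n-th program never halts on input n' — and suppose S is sound, i.e. every n ∈ S really satisfies ¬((Nat.Partrec.Code.ofNat n).eval n).Dom. Then S is incomplete: there exists n with ¬((Nat.Partrec.Code.ofNat n).eval n).Dom and n ∉ S. -/
/-!
An r.e. set `S` is the halting set of some program `c`. Run `c` on its own index `n`: it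
halts iff `n ∈ S`, and soundness forbids `n ∈ S` together with halting, so `c` diverges on `n`
while `n ∉ S`.
-/

open Nat.Partrec

theorem REPred.exists_code_eval_dom_iff {p : ℕ → Prop} (hp : REPred p) :
    ∃ c : Code, ∀ n, (c.eval n).Dom ↔ p n := by
  have hf : Nat.Partrec fun n => (Part.assert (p n) fun _ => Part.some ()).map fun _ => 0 :=
    Partrec.nat_iff.1 <| hp.map ((Computable.const 0).comp Computable.snd).to₂
  obtain ⟨c, hc⟩ := Code.exists_code.1 hf
  exact ⟨c, fun n => by simp [hc, Part.assert]⟩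

/-- Incompleteness for non-halting: any sound r.e. set of indices proved to diverge
on their own index misses some true instance of non-halting. -/
theorem nonhalting_incompleteness (S : Set ℕ)
    (hre : REPred (fun n => n ∈ S))
    (hsound : ∀ n ∈ S, ¬ ((Denumerable.ofNat Nat.Partrec.Code n).eval n).Dom) :
    ∃ n, ¬ ((Denumerable.ofNat Nat.Partrec.Code n).eval n).Dom ∧ n ∉ S := by
  obtain ⟨c, hc⟩ := hre.exists_code_eval_dom_iff
  have hsound_c : Encodable.encode c ∈ S → ¬(c.eval (Encodable.encode c)).Dom := by
    simpa only [Denumerable.ofNat_encode] using hsound (Encodable.encode c)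
  have hnotMem : Encodable.encode c ∉ S := fun h => hsound_c h ((hc _).2 h)
  exact ⟨Encodable.encode c, by rwa [Denumerable.ofNat_encode, hc], hnotMem⟩
end

section
/- Kraft's inequality for self-delimiting (prefix-free) binary programs: let S be a set of finite bit strings (S : Set (List Bool)) that is prefix-free, meaning that if s, t ∈ S and s is a prefix of t (s <+: t) then s = t. Then the family indexed by S of weights 2^(-length s) is summable in ℝ and its sum satisfies ∑' (s : S), (2 : ℝ)^(-(s : List Bool).length : ℤ) ≤ 1. (This is why the halting probability Omega of a self-delimiting universal computer, a sum of 1/2^(number of bits in p) over all halting programs p, is a probability between zero and one.) -/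
open Finset

lemma kraft_finset (F : Finset (List Bool))
    (hpf : ∀ s ∈ F, ∀ t ∈ F, s <+: t → s = t) :
    ∑ s ∈ F, (2 : ℝ) ^ (-(s.length : ℤ)) ≤ 1 := by
  set n := F.sup List.length with hn
  have hlen : ∀ s ∈ F, s.length ≤ n := fun s hs => Finset.le_sup hs
  set E : List Bool → Finset (List Bool) :=
    fun s => (Finset.univ : Finset (Fin (n - s.length) → Bool)).image
      (fun f => s ++ List.ofFn f) with hE
  have hcard : ∀ s : List Bool, (E s).card = 2 ^ (n - s.length) := by
    intro s
    rw [hE]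
    rw [Finset.card_image_of_injective _ (fun f g h => List.ofFn_injective
      (List.append_cancel_left h))]
    simp
  have hmem : ∀ s t, t ∈ E s → s <+: t ∧ t.length = s.length + (n - s.length) := by
    intro s t ht
    simp only [hE, Finset.mem_image] at ht
    obtain ⟨f, _, rfl⟩ := ht
    exact ⟨⟨_, rfl⟩, by simp⟩
  have hdisj : ∀ s ∈ F, ∀ t ∈ F, s ≠ t → Disjoint (E s) (E t) := by
    intro s hs t ht hst
    rw [Finset.disjoint_left]
    intro a has hat
    obtain ⟨h1, _⟩ := hmem s a has
    obtain ⟨h2, _⟩ := hmem t a hat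
    rcases List.prefix_or_prefix_of_prefix h1 h2 with h | h
    · exact hst (hpf s hs t ht h)
    · exact hst (hpf t ht s hs h).symm
  have hsub : F.biUnion E ⊆ (Finset.univ : Finset (Fin n → Bool)).image List.ofFn := by
    intro t ht
    rw [Finset.mem_biUnion] at ht
    obtain ⟨s, hs, hts⟩ := ht
    obtain ⟨_, hlent⟩ := hmem s t hts
    have htn : t.length = n := by have := hlen s hs; omega
    exact Finset.mem_image.2 ⟨t.get ∘ Fin.cast htn.symm, Finset.mem_univ _,
      by apply List.ext_get <;> simp [htn]⟩
  have hnat : ∑ s ∈ F, 2 ^ (n - s.length) ≤ 2 ^ n := by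
    calc ∑ s ∈ F, 2 ^ (n - s.length) = ∑ s ∈ F, (E s).card := by
          exact Finset.sum_congr rfl (fun s _ => (hcard s).symm)
      _ = (F.biUnion E).card := (Finset.card_biUnion hdisj).symm
      _ ≤ ((Finset.univ : Finset (Fin n → Bool)).image List.ofFn).card :=
          Finset.card_le_card hsub
      _ ≤ (Finset.univ : Finset (Fin n → Bool)).card := Finset.card_image_le
      _ = 2 ^ n := by simp
  have key : ∀ s ∈ F, (2 : ℝ) ^ (-(s.length : ℤ))
      = (2 : ℝ) ^ (n - s.length) * (2 : ℝ) ^ (-(n : ℤ)) := by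
    intro s hs
    have h := hlen s hs
    rw [← zpow_natCast (2 : ℝ) (n - s.length), ← zpow_add₀ (two_ne_zero)]
    congr 1
    omega
  calc ∑ s ∈ F, (2 : ℝ) ^ (-(s.length : ℤ))
      = (∑ s ∈ F, (2 : ℝ) ^ (n - s.length)) * (2 : ℝ) ^ (-(n : ℤ)) := by
        rw [Finset.sum_mul]; exact Finset.sum_congr rfl key
    _ ≤ (2 : ℝ) ^ n * (2 : ℝ) ^ (-(n : ℤ)) := by
        apply mul_le_mul_of_nonneg_right _ (by positivity)
        exact_mod_cast hnat
    _ = 1 := by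
        rw [← zpow_natCast (2 : ℝ) n, ← zpow_add₀ (two_ne_zero)]
        simp

/-- Kraft's inequality for prefix-free sets of finite bit strings. -/
theorem kraft_inequality (S : Set (List Bool))
    (hpf : ∀ s ∈ S, ∀ t ∈ S, s <+: t → s = t) :
    Summable (fun s : S => (2 : ℝ) ^ (-((s : List Bool).length : ℤ))) ∧
    ∑' s : S, (2 : ℝ) ^ (-((s : List Bool).length : ℤ)) ≤ 1 := by
  have hb : ∀ u : Finset S, ∑ s ∈ u, (2 : ℝ) ^ (-((s : List Bool).length : ℤ)) ≤ 1 := by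
    intro u
    have := kraft_finset (u.image (fun s : S => (s : List Bool)))
      (fun s hs t ht h => by
        simp only [Finset.mem_image] at hs ht
        obtain ⟨a, _, rfl⟩ := hs
        obtain ⟨b, _, rfl⟩ := ht
        exact hpf a a.2 b b.2 h)
    rwa [Finset.sum_image (fun a _ b _ h => Subtype.ext h)] at this
  have hs : Summable (fun s : S => (2 : ℝ) ^ (-((s : List Bool).length : ℤ))) :=
    summable_of_sum_le (fun s => by positivity) hb
  exact ⟨hs, Summable.tsum_le_of_sum_le hs hb⟩
end
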